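/- Fix two distinct points A, B ∈ ℝ³ and let p₂ = α_AA δ_A⊗δ_A + α_AB δ_A⊗δ_B + α_BA δ_B⊗δ_A + α_BB δ_B⊗δ_B be a measure with coefficients satisfying α_ij ≥ 0, Σ α_ij = 1, α_AB = α_BA. Then p₂ is 3-density representable if and only if α_AB + α_BA ≤ 2(α_AA + α_BB). -/

import Mathlib

open MeasureTheory ENNReal

noncomputable section

abbrev R3 : Type := EuclideanSpace ℝ (Fin 3)

def IsSymmetricMeasure {N : ℕ} (p : Measure (Fin N → R3)) : Prop :=
  ∀ σ : Equiv.Perm (Fin N), p.map (fun x => x ∘ σ) = p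

def pairMarginal {N : ℕ} (hN : 2 ≤ N) (p : Measure (Fin N → R3)) : Measure (R3 × R3) :=
  p.map (fun x => (x ⟨0, by omega⟩, x ⟨1, by omega⟩))

def NDensityRep (N : ℕ) (hN : 2 ≤ N) (p₂ : Measure (R3 × R3)) : Prop :=
  ∃ pN : Measure (Fin N → R3), IsProbabilityMeasure pN ∧ IsSymmetricMeasure pN ∧
    pairMarginal hN pN = p₂

/-- The two-site pair measure with coefficients `α_ij`:
`p₂ = α_AA δ_A⊗δ_A + α_AB δ_A⊗δ_B + α_BA δ_B⊗δ_A + α_BB δ_B⊗δ_B`. -/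
def twoSitePair (A B : R3) (αAA αAB αBA αBB : ℝ) : Measure (R3 × R3) :=
  ENNReal.ofReal αAA • (Measure.dirac A).prod (Measure.dirac A)
    + ENNReal.ofReal αAB • (Measure.dirac A).prod (Measure.dirac B)
    + ENNReal.ofReal αBA • (Measure.dirac B).prod (Measure.dirac A)
    + ENNReal.ofReal αBB • (Measure.dirac B).prod (Measure.dirac B)

/- ### Auxiliary lemmas -/

lemma meas_comp_perm (σ : Equiv.Perm (Fin 3)) :
    Measurable (fun x : Fin 3 → R3 => x ∘ σ) :=
  measurable_pi_lambda _ fun i => measurable_pi_apply _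

lemma meas_proj3 : Measurable (fun x : Fin 3 → R3 => (x ⟨0, by omega⟩, x ⟨1, by omega⟩)) :=
  (measurable_pi_apply _).prodMk (measurable_pi_apply _)

lemma comp_perm_eq (f : Fin 3 → R3) (σ : Equiv.Perm (Fin 3)) :
    f ∘ σ = ![f (σ 0), f (σ 1), f (σ 2)] := by
  funext i; fin_cases i <;> rfl

/-- The symmetric candidate three-point measure. -/
def triMeasure (A B : R3) (a b c d : ℝ) : Measure (Fin 3 → R3) :=
  ENNReal.ofReal a • Measure.dirac ![A,A,A]
    + (ENNReal.ofReal b • Measure.dirac ![A,A,B]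
    + ENNReal.ofReal b • Measure.dirac ![A,B,A]
    + ENNReal.ofReal b • Measure.dirac ![B,A,A])
    + (ENNReal.ofReal c • Measure.dirac ![A,B,B]
    + ENNReal.ofReal c • Measure.dirac ![B,A,B]
    + ENNReal.ofReal c • Measure.dirac ![B,B,A])
    + ENNReal.ofReal d • Measure.dirac ![B,B,B]

lemma triMeasure_symm (A B : R3) (a b c d : ℝ) :
    IsSymmetricMeasure (triMeasure A B a b c d) := by
  intro σ
  refine Equiv.Perm.swap_induction_on σ ?_ ?_
  · have : (fun x : Fin 3 → R3 => x ∘ (1 : Equiv.Perm (Fin 3))) = id := by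
      funext x; rfl
    rw [this, Measure.map_id]
  · intro σ i j hij hσ
    have hcomp : (fun x : Fin 3 → R3 => x ∘ (Equiv.swap i j * σ))
        = (fun x : Fin 3 → R3 => x ∘ σ) ∘ (fun x : Fin 3 → R3 => x ∘ (Equiv.swap i j)) := by
      funext x; rfl
    rw [hcomp, ← Measure.map_map (meas_comp_perm σ) (meas_comp_perm _)]
    have hswap : (triMeasure A B a b c d).map
        (fun x : Fin 3 → R3 => x ∘ (Equiv.swap i j)) = triMeasure A B a b c d := by
      unfold triMeasure
      simp only [Measure.map_add _ _ (meas_comp_perm _), Measure.map_smul,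
        Measure.map_dirac' (meas_comp_perm _)]
      fin_cases i <;> fin_cases j <;>
        simp only [comp_perm_eq, Equiv.swap_apply_def] <;>
        norm_num [Fin.ext_iff] <;> ac_rfl
    rw [hswap, hσ]


lemma triMeasure_prob (A B : R3) (a b c d : ℝ)
    (ha : 0 ≤ a) (hb : 0 ≤ b) (hc : 0 ≤ c) (hd : 0 ≤ d)
    (h : a + 3*b + 3*c + d = 1) : IsProbabilityMeasure (triMeasure A B a b c d) := by
  constructor
  unfold triMeasure
  simp only [Measure.add_apply, Measure.smul_apply, smul_eq_mul, measure_univ, mul_one]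
  rw [← ENNReal.ofReal_add hb hb, ← ENNReal.ofReal_add (by linarith) hb,
    ← ENNReal.ofReal_add hc hc, ← ENNReal.ofReal_add (by linarith) hc,
    ← ENNReal.ofReal_add ha (by linarith), ← ENNReal.ofReal_add (by linarith) (by linarith),
    ← ENNReal.ofReal_add (by linarith) hd, show a + (b + b + b) + (c + c + c) + d = 1 by linarith,
    ENNReal.ofReal_one]

lemma triMeasure_marginal (A B : R3) (a b c d αAA αAB αBA αBB : ℝ)
    (ha : 0 ≤ a) (hb : 0 ≤ b) (hc : 0 ≤ c) (hd : 0 ≤ d)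
    (hA : a + b = αAA) (h1 : b + c = αAB) (h2 : b + c = αBA) (hB : c + d = αBB) :
    pairMarginal (by norm_num) (triMeasure A B a b c d) = twoSitePair A B αAA αAB αBA αBB := by
  unfold pairMarginal triMeasure twoSitePair
  simp only [Measure.map_add _ _ meas_proj3, Measure.map_smul,
    Measure.map_dirac' meas_proj3, Measure.dirac_prod_dirac]
  norm_num [Fin.mk_zero, Fin.mk_one]
  rw [← hA, ← h1, ← h2, ← hB, ENNReal.ofReal_add ha hb, ENNReal.ofReal_add hb hc,
    ENNReal.ofReal_add hc hd, add_smul, add_smul, add_smul, add_smul]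
  abel

/-- A two-site pair measure (nonnegative, normalized, symmetric coefficients) is 3-density
representable if and only if `α_AB + α_BA ≤ 2(α_AA + α_BB)`. -/
theorem three_rep_iff_linear_inequality (A B : R3) (hAB : A ≠ B)
    (αAA αAB αBA αBB : ℝ)
    (hAA : 0 ≤ αAA) (hAB' : 0 ≤ αAB) (hBA : 0 ≤ αBA) (hBB : 0 ≤ αBB)
    (hsum : αAA + αAB + αBA + αBB = 1) (hsymm : αAB = αBA) :
    NDensityRep 3 (by omega) (twoSitePair A B αAA αAB αBA αBB) ↔
      αAB + αBA ≤ 2 * (αAA + αBB) := by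
  constructor
  · -- forward direction
    rintro ⟨μ, hprob, hsym, hmarg⟩
    have hmarg' : μ.map (fun x : Fin 3 → R3 => (x ⟨0, by omega⟩, x ⟨1, by omega⟩))
        = twoSitePair A B αAA αAB αBA αBB := hmarg
    have hp2 : ∀ s : Set (R3 × R3), MeasurableSet s →
        μ ((fun x : Fin 3 → R3 => (x ⟨0, by omega⟩, x ⟨1, by omega⟩)) ⁻¹' s)
          = twoSitePair A B αAA αAB αBA αBB s := by
      intro s hs
      rw [← Measure.map_apply meas_proj3 hs, hmarg']
    have hSAB : MeasurableSet ({A, B} : Set R3) :=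
      (measurableSet_singleton B).insert A
    have hT : MeasurableSet {x : Fin 3 → R3 | x 0 ∉ ({A, B} : Set R3)} := by
      have heq : {x : Fin 3 → R3 | x 0 ∉ ({A, B} : Set R3)}
          = (fun x : Fin 3 → R3 => x 0) ⁻¹' (({A, B} : Set R3)ᶜ) := rfl
      rw [heq]
      exact (measurable_pi_apply 0) hSAB.compl
    have hnull0 : μ {x : Fin 3 → R3 | x 0 ∉ ({A, B} : Set R3)} = 0 := by
      have hpre : (fun x : Fin 3 → R3 => (x ⟨0, by omega⟩, x ⟨1, by omega⟩)) ⁻¹'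
          ((({A, B} : Set R3)ᶜ) ×ˢ (Set.univ : Set R3))
          = {x : Fin 3 → R3 | x 0 ∉ ({A, B} : Set R3)} := by
        ext x; simp [Set.mem_prod]
      have := hp2 ((({A, B} : Set R3)ᶜ) ×ˢ (Set.univ : Set R3))
        (hSAB.compl.prod MeasurableSet.univ)
      rw [hpre] at this
      rw [this]
      simp [twoSitePair, Measure.dirac_prod_dirac, Measure.dirac_apply,
        Set.indicator_apply, Set.mem_prod]
    have hnull2 : μ {x : Fin 3 → R3 | x 2 ∉ ({A, B} : Set R3)} = 0 := by
      have hmap := hsym (Equiv.swap 0 2)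
      have h1 : (fun x : Fin 3 → R3 => x ∘ (Equiv.swap (0:Fin 3) 2)) ⁻¹'
          {x : Fin 3 → R3 | x 0 ∉ ({A, B} : Set R3)}
          = {x : Fin 3 → R3 | x 2 ∉ ({A, B} : Set R3)} := by
        ext x
        simp [Equiv.swap_apply_left]
      calc μ {x : Fin 3 → R3 | x 2 ∉ ({A, B} : Set R3)}
          = μ ((fun x : Fin 3 → R3 => x ∘ (Equiv.swap (0:Fin 3) 2)) ⁻¹'
              {x : Fin 3 → R3 | x 0 ∉ ({A, B} : Set R3)}) := by rw [h1]
        _ = (μ.map (fun x : Fin 3 → R3 => x ∘ (Equiv.swap (0:Fin 3) 2)))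
              {x : Fin 3 → R3 | x 0 ∉ ({A, B} : Set R3)} :=
            (Measure.map_apply (meas_comp_perm _) hT).symm
        _ = μ {x : Fin 3 → R3 | x 0 ∉ ({A, B} : Set R3)} := by rw [hmap]
        _ = 0 := hnull0
    -- decomposition of pair-preimages of singletons
    have key : ∀ u v : R3,
        μ ((fun x : Fin 3 → R3 => (x ⟨0, by omega⟩, x ⟨1, by omega⟩)) ⁻¹' {(u, v)})
          = μ {![u, v, A]} + μ {![u, v, B]} := by
      intro u v
      set S0 := (fun x : Fin 3 → R3 => (x ⟨0, by omega⟩, x ⟨1, by omega⟩)) ⁻¹' {(u, v)} with hS0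
      have hne : (![u, v, A] : Fin 3 → R3) ≠ ![u, v, B] := by
        intro h
        exact hAB (congrFun h 2)
      have hdisj : Disjoint ({![u, v, A]} : Set (Fin 3 → R3)) {![u, v, B]} := by
        simp [Set.disjoint_singleton, hne]
      have hsub : ({![u, v, A]} : Set (Fin 3 → R3)) ∪ {![u, v, B]} ⊆ S0 := by
        rintro x (hx | hx) <;> rw [Set.mem_singleton_iff] at hx <;> subst hx <;>
          simp [hS0, Set.mem_preimage]
      have hdecomp : S0 ⊆ (({![u, v, A]} : Set (Fin 3 → R3)) ∪ {![u, v, B]}) ∪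
          {x : Fin 3 → R3 | x 2 ∉ ({A, B} : Set R3)} := by
        intro x hx
        rw [hS0, Set.mem_preimage, Set.mem_singleton_iff, Prod.ext_iff] at hx
        obtain ⟨h0, h1⟩ := hx
        by_cases h2 : x 2 ∈ ({A, B} : Set R3)
        · left
          rcases h2 with h2 | h2
          · left
            rw [Set.mem_singleton_iff]
            funext i; fin_cases i
            · exact h0
            · exact h1
            · exact h2
          · right
            rw [Set.mem_singleton_iff] at h2 ⊢
            funext i; fin_cases i
            · exact h0
            · exact h1
            · exact h2
        · right; exact h2
      refine le_antisymm ?_ ?_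
      · calc μ S0 ≤ μ ((({![u, v, A]} : Set (Fin 3 → R3)) ∪ {![u, v, B]}) ∪
            {x : Fin 3 → R3 | x 2 ∉ ({A, B} : Set R3)}) := measure_mono hdecomp
          _ ≤ μ (({![u, v, A]} : Set (Fin 3 → R3)) ∪ {![u, v, B]}) +
              μ {x : Fin 3 → R3 | x 2 ∉ ({A, B} : Set R3)} := measure_union_le _ _
          _ = μ (({![u, v, A]} : Set (Fin 3 → R3)) ∪ {![u, v, B]}) := by
              rw [hnull2, add_zero]
          _ = μ {![u, v, A]} + μ {![u, v, B]} :=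
              measure_union hdisj (measurableSet_singleton _)
      · calc μ {![u, v, A]} + μ {![u, v, B]}
            = μ (({![u, v, A]} : Set (Fin 3 → R3)) ∪ {![u, v, B]}) :=
              (measure_union hdisj (measurableSet_singleton _)).symm
          _ ≤ μ S0 := measure_mono hsub
    -- evaluate the four pair probabilities
    have hABne : ((A, B) : R3 × R3) ≠ (A, A) := by simp [Prod.ext_iff, Ne.symm hAB]
    have eAA : μ {![A, A, A]} + μ {![A, A, B]} = ENNReal.ofReal αAA := by
      rw [← key A A, hp2 _ (measurableSet_singleton _)]
      simp [twoSitePair, Measure.dirac_prod_dirac, Measure.dirac_apply,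
        Set.indicator_apply, Prod.ext_iff, hAB, Ne.symm hAB]
    have eAB : μ {![A, B, A]} + μ {![A, B, B]} = ENNReal.ofReal αAB := by
      rw [← key A B, hp2 _ (measurableSet_singleton _)]
      simp [twoSitePair, Measure.dirac_prod_dirac, Measure.dirac_apply,
        Set.indicator_apply, Prod.ext_iff, hAB, Ne.symm hAB]
    have eBA : μ {![B, A, A]} + μ {![B, A, B]} = ENNReal.ofReal αBA := by
      rw [← key B A, hp2 _ (measurableSet_singleton _)]
      simp [twoSitePair, Measure.dirac_prod_dirac, Measure.dirac_apply,
        Set.indicator_apply, Prod.ext_iff, hAB, Ne.symm hAB]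
    have eBB : μ {![B, B, A]} + μ {![B, B, B]} = ENNReal.ofReal αBB := by
      rw [← key B B, hp2 _ (measurableSet_singleton _)]
      simp [twoSitePair, Measure.dirac_prod_dirac, Measure.dirac_apply,
        Set.indicator_apply, Prod.ext_iff, hAB, Ne.symm hAB]
    -- symmetry of singleton masses
    have hswapT : ∀ (f : Fin 3 → R3) (σ : Equiv.Perm (Fin 3)), μ {f ∘ σ} = μ {f} := by
      intro f σ
      conv_rhs => rw [← hsym σ⁻¹]
      rw [Measure.map_apply (meas_comp_perm _) (measurableSet_singleton _)]
      congr 1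
      ext x
      simp only [Set.mem_preimage, Set.mem_singleton_iff]
      constructor
      · intro h
        subst h
        funext i
        simp [Function.comp, Equiv.Perm.inv_def, Equiv.apply_symm_apply]
      · intro h
        rw [← h]
        funext i
        simp [Function.comp, Equiv.Perm.inv_def, Equiv.symm_apply_apply]
    have c1 : (![A, A, B] : Fin 3 → R3) ∘ (Equiv.swap (1 : Fin 3) 2) = ![A, B, A] := by
      funext i; fin_cases i <;> simp [Equiv.swap_apply_def]
    have c2 : (![A, A, B] : Fin 3 → R3) ∘ (Equiv.swap (0 : Fin 3) 2) = ![B, A, A] := by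
      funext i; fin_cases i <;> simp [Equiv.swap_apply_def]
    have c3 : (![B, B, A] : Fin 3 → R3) ∘ (Equiv.swap (0 : Fin 3) 2) = ![A, B, B] := by
      funext i; fin_cases i <;> simp [Equiv.swap_apply_def]
    have c4 : (![B, B, A] : Fin 3 → R3) ∘ (Equiv.swap (1 : Fin 3) 2) = ![B, A, B] := by
      funext i; fin_cases i <;> simp [Equiv.swap_apply_def]
    have t1 : μ {![A, B, A]} = μ {![A, A, B]} := by
      rw [← c1]; exact hswapT _ _
    have t2 : μ {![B, A, A]} = μ {![A, A, B]} := by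
      rw [← c2]; exact hswapT _ _
    have t3 : μ {![A, B, B]} = μ {![B, B, A]} := by
      rw [← c3]; exact hswapT _ _
    have t4 : μ {![B, A, B]} = μ {![B, B, A]} := by
      rw [← c4]; exact hswapT _ _
    rw [t1, t3] at eAB
    rw [t2, t4] at eBA
    set x := μ {![A, A, B]} with hx
    set y := μ {![B, B, A]} with hy
    set p := μ {![A, A, A]} with hp
    set q := μ {![B, B, B]} with hq
    have hEE : ENNReal.ofReal (αAB + αBA) ≤ ENNReal.ofReal (2 * (αAA + αBB)) := by
      rw [ENNReal.ofReal_add hAB' hBA,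
        show 2 * (αAA + αBB) = (αAA + αBB) + (αAA + αBB) by ring,
        ENNReal.ofReal_add (by linarith) (by linarith), ENNReal.ofReal_add hAA hBB,
        ← eAB, ← eBA, ← eAA, ← eBB]
      have hrearr : (p + x) + (y + q) = (x + y) + (p + q) := by ring
      rw [hrearr]
      exact add_le_add le_self_add le_self_add
    exact (ENNReal.ofReal_le_ofReal_iff (by positivity)).mp hEE
  · -- backward direction: explicit construction
    intro h
    have hkey : αAB ≤ αAA + αBB := by rw [hsymm] at h ⊢; linarith
    set b := min αAB αAA with hb
    set c := αAB - b with hc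
    set a := αAA - b with ha
    set d := αBB - c with hd
    have hb0 : 0 ≤ b := le_min hAB' hAA
    have hbAB : b ≤ αAB := min_le_left _ _
    have hbAA : b ≤ αAA := min_le_right _ _
    have ha0 : 0 ≤ a := by simp [ha]; linarith
    have hc0 : 0 ≤ c := by simp [hc]; linarith
    have hd0 : 0 ≤ d := by
      rcases le_total αAB αAA with h' | h'
      · rw [hd, hc, hb, min_eq_left h']; simp [hBB]
      · rw [hd, hc, hb, min_eq_right h']; linarith
    refine ⟨triMeasure A B a b c d, ?_, triMeasure_symm A B a b c d, ?_⟩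
    · exact triMeasure_prob A B a b c d ha0 hb0 hc0 hd0 (by rw [ha, hc, hd, hb] at *; ring_nf; linarith)
    · exact triMeasure_marginal A B a b c d αAA αAB αBA αBB ha0 hb0 hc0 hd0
        (by rw [ha]; ring) (by rw [hc]; ring) (by rw [hc, ← hsymm]; ring) (by rw [hd]; ring)

end
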